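/- arXiv:2509.20753 — 3 statements merged into one kernel-verified Lean document; each statement's English description precedes it below -/
import Mathlib

section
/- Let A be an n×n real symmetric negative definite matrix and let Ψ : [0,∞) → ℝ^{n×n} be differentiable with Ψ′(τ) = Ψ(τ) Aᵀ + A Ψ(τ) + 2I for all τ ≥ 0, where I is the n×n identity matrix. Then for any initial value Ψ(0), Ψ(τ) → (−A)⁻¹ as τ → ∞ (convergence entrywise, equivalently in any matrix norm). -/
/-! Since `A` is symmetric, `(-A)⁻¹` is an equilibrium of the equation, and `E = Ψ - (-A)⁻¹`
solves the homogeneous Sylvester equation `E' = E A + A E`. Negative definiteness holds uniformly,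
`xᵀ A x ≤ -c |x|²`, by compactness of the unit sphere; summing it over the rows and the columns
of `E` gives `V' ≤ -4c V` for the sum of squared entries `V`, so `V(τ) ≤ V(0) e^{-4cτ} → 0`
by Grönwall. -/

open Matrix Filter Topology Set

theorem exists_pos_dotProduct_mulVec_le_neg_mul {ι : Type*} [Fintype ι] (A : Matrix ι ι ℝ)
    (hA : ∀ x : ι → ℝ, x ≠ 0 → x ⬝ᵥ A *ᵥ x < 0) :
    ∃ c > 0, ∀ x : ι → ℝ, x ⬝ᵥ A *ᵥ x ≤ -c * (x ⬝ᵥ x) := by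
  cases isEmpty_or_nonempty ι
  · exact ⟨1, one_pos, fun x => by simp [dotProduct]⟩
  let q : EuclideanSpace ℝ ι → ℝ := fun y => y.ofLp ⬝ᵥ A *ᵥ y.ofLp
  have hq : Continuous q := by unfold q; fun_prop
  obtain ⟨u, hu, hmax⟩ := (isCompact_sphere (0 : EuclideanSpace ℝ ι) 1).exists_isMaxOn
    (NormedSpace.sphere_nonempty.mpr zero_le_one) hq.continuousOn
  have hu0 : u.ofLp ≠ 0 := by
    rintro h
    simp [show u = 0 from (WithLp.ofLp_eq_zero 2).mp h] at hu
  refine ⟨-q u, neg_pos.mpr (hA _ hu0), fun x => ?_⟩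
  rcases eq_or_ne x 0 with rfl | hx
  · simp
  set r := ‖WithLp.toLp 2 x‖
  have hr : 0 < r := norm_pos_iff.mpr (by simpa using hx)
  have hxx : x ⬝ᵥ x = r ^ 2 := by
    rw [EuclideanSpace.real_norm_sq_eq]; simp [dotProduct, sq]
  have hscale : q (r⁻¹ • WithLp.toLp 2 x) = (x ⬝ᵥ A *ᵥ x) / r ^ 2 := by
    simp only [q, WithLp.ofLp_smul, mulVec_smul, dotProduct_smul, smul_dotProduct, smul_eq_mul]
    field_simp
  have hle : q (r⁻¹ • WithLp.toLp 2 x) ≤ q u :=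
    hmax (by simp [norm_smul, r, hr.ne'])
  rw [hscale, div_le_iff₀ (by positivity)] at hle
  rw [hxx]; linarith

theorem le_mul_exp_of_hasDerivWithinAt_le_mul {f f' : ℝ → ℝ} {K a : ℝ}
    (hf : ∀ t ∈ Ici a, HasDerivWithinAt f (f' t) (Ici a) t)
    (bound : ∀ t ∈ Ici a, f' t ≤ K * f t) {t : ℝ} (ht : a ≤ t) :
    f t ≤ f a * Real.exp (K * (t - a)) := by
  have hcont : ContinuousOn f (Icc a t) := fun s hs =>
    (hf s hs.1).continuousWithinAt.mono Icc_subset_Ici_self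
  have := le_gronwallBound_of_liminf_deriv_right_le (ε := 0) hcont
    (fun s hs _ hr => ((hf s hs.1).mono (Ici_subset_Ici.mpr hs.1)).liminf_right_slope_le hr)
    le_rfl (fun s hs => by simpa using bound s hs.1) t ⟨ht, le_rfl⟩
  rwa [gronwallBound_ε0] at this

theorem tendsto_zero_of_hasDerivWithinAt_le_neg_mul {f f' : ℝ → ℝ} {k : ℝ} (hk : 0 < k)
    (hf : ∀ t ∈ Ici 0, HasDerivWithinAt f (f' t) (Ici 0) t)
    (bound : ∀ t ∈ Ici 0, f' t ≤ -k * f t) (hf0 : ∀ t, 0 ≤ f t) :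
    Tendsto f atTop (𝓝 0) := by
  have hexp : Tendsto (fun t => f 0 * Real.exp (-k * (t - 0))) atTop (𝓝 0) := by
    simpa using ((Real.tendsto_exp_atBot.comp
      (tendsto_id.const_mul_atTop_of_neg (neg_neg_of_pos hk)))).const_mul (f 0)
  exact tendsto_of_tendsto_of_tendsto_of_le_of_le' tendsto_const_nhds hexp
    (Eventually.of_forall hf0)
    ((eventually_ge_atTop 0).mono fun t ht => le_mul_exp_of_hasDerivWithinAt_le_mul hf bound ht)

section Sylvester

variable {m n : Type*} [Fintype m] [Fintype n] {A : Matrix n n ℝ} {B : Matrix m m ℝ} {a b : ℝ}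

theorem sum_mul_sylvester_le (hA : ∀ x, x ⬝ᵥ A *ᵥ x ≤ -a * (x ⬝ᵥ x))
    (hB : ∀ x, x ⬝ᵥ B *ᵥ x ≤ -b * (x ⬝ᵥ x)) (E : Matrix m n ℝ) :
    ∑ i, ∑ j, E i j * (E * A + B * E) i j ≤ -(a + b) * ∑ i, ∑ j, E i j ^ 2 := by
  have hrows : ∑ i, ∑ j, E i j * (E * A) i j = ∑ i, E i ⬝ᵥ A *ᵥ E i := by
    refine Finset.sum_congr rfl fun i _ => ?_
    rw [dotProduct_mulVec, dotProduct_comm]; rfl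
  have hcols : ∑ i, ∑ j, E i j * (B * E) i j = ∑ j, Eᵀ j ⬝ᵥ B *ᵥ Eᵀ j := by
    rw [Finset.sum_comm]; rfl
  have hsq : ∑ i, ∑ j, E i j ^ 2 = ∑ i, E i ⬝ᵥ E i := by
    simp only [dotProduct, sq]
  have hsq' : ∑ i, ∑ j, E i j ^ 2 = ∑ j, Eᵀ j ⬝ᵥ Eᵀ j := by
    rw [Finset.sum_comm]; simp only [dotProduct, sq]; rfl
  calc ∑ i, ∑ j, E i j * (E * A + B * E) i j
      = ∑ i, E i ⬝ᵥ A *ᵥ E i + ∑ j, Eᵀ j ⬝ᵥ B *ᵥ Eᵀ j := by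
        simp only [Matrix.add_apply, mul_add, Finset.sum_add_distrib, hrows, hcols]
    _ ≤ ∑ i, -a * (E i ⬝ᵥ E i) + ∑ j, -b * (Eᵀ j ⬝ᵥ Eᵀ j) := by
        gcongr with i _ j _
        exacts [hA _, hB _]
    _ = -(a + b) * ∑ i, ∑ j, E i j ^ 2 := by
        rw [← Finset.mul_sum, ← Finset.mul_sum, ← hsq, ← hsq']; ring

theorem tendsto_zero_of_hasDerivWithinAt_sylvester (hab : 0 < a + b)
    (hA : ∀ x, x ⬝ᵥ A *ᵥ x ≤ -a * (x ⬝ᵥ x)) (hB : ∀ x, x ⬝ᵥ B *ᵥ x ≤ -b * (x ⬝ᵥ x))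
    {E : ℝ → Matrix m n ℝ}
    (hE : ∀ t ∈ Ici 0, ∀ i j, HasDerivWithinAt (fun s => E s i j)
      ((E t * A + B * E t) i j) (Ici 0) t) (i : m) (j : n) :
    Tendsto (fun t => E t i j) atTop (𝓝 0) := by
  set V : ℝ → ℝ := fun t => ∑ i, ∑ j, E t i j ^ 2
  have hV : ∀ t ∈ Ici 0, HasDerivWithinAt V
      (2 * ∑ i, ∑ j, E t i j * (E t * A + B * E t) i j) (Ici 0) t := fun t ht => by
    simp only [Finset.mul_sum]
    refine HasDerivWithinAt.fun_sum fun i _ => HasDerivWithinAt.fun_sum fun j _ => ?_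
    exact ((hE t ht i j).fun_pow 2).congr_deriv (by push_cast; ring)
  have hV0 : Tendsto V atTop (𝓝 0) :=
    tendsto_zero_of_hasDerivWithinAt_le_neg_mul (by positivity : 0 < 2 * (a + b)) hV
      (fun t _ => by linarith [sum_mul_sylvester_le hA hB (E t)])
      (fun t => by positivity)
  have hentry : ∀ t, |E t i j| ≤ √(V t) := fun t => Real.abs_le_sqrt <|
    (Finset.single_le_sum (fun j _ => sq_nonneg (E t i j)) (Finset.mem_univ j)).trans <|
      Finset.single_le_sum (f := fun i => ∑ j, E t i j ^ 2) (fun i _ => by positivity)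
        (Finset.mem_univ i)
  exact squeeze_zero_norm hentry (by simpa using hV0.sqrt)

end Sylvester

/-- A solution of the matrix ODE `Ψ' = Ψ Aᵀ + A Ψ + 2 I` on `[0, ∞)` with `A` real symmetric
negative definite converges (entrywise) to `(-A)⁻¹` as `τ → ∞`, for any initial value. -/
theorem stmt_3 (n : ℕ) (A : Matrix (Fin n) (Fin n) ℝ)
    (hA_symm : A.IsSymm)
    (hA_neg : ∀ x : Fin n → ℝ, x ≠ 0 → x ⬝ᵥ (A *ᵥ x) < 0)
    (Ψ : ℝ → Matrix (Fin n) (Fin n) ℝ)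
    (hΨ : ∀ τ : ℝ, 0 ≤ τ → ∀ i j, HasDerivWithinAt (fun t => Ψ t i j)
        ((Ψ τ * Aᵀ + A * Ψ τ + (2 : ℝ) • (1 : Matrix (Fin n) (Fin n) ℝ)) i j)
        (Set.Ici 0) τ) :
    ∀ i j, Tendsto (fun τ => Ψ τ i j) atTop (nhds ((-A)⁻¹ i j)) := by
  intro i j
  obtain ⟨c, hc, hbound⟩ := exists_pos_dotProduct_mulVec_le_neg_mul A hA_neg
  have hdet : IsUnit (-A).det := by
    refine isUnit_iff_ne_zero.mpr fun h => ?_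
    obtain ⟨v, hv, hAv⟩ := exists_mulVec_eq_zero_iff.mpr h
    rw [neg_mulVec, neg_eq_zero] at hAv
    simpa [hAv] using hA_neg v hv
  set C := (-A)⁻¹
  have hAC : A * C = -1 := neg_eq_iff_eq_neg.mp (by simpa using mul_nonsing_inv (-A) hdet)
  have hCA : C * A = -1 := neg_eq_iff_eq_neg.mp (by simpa using nonsing_inv_mul (-A) hdet)
  have hshift : ∀ P, P * Aᵀ + A * P + (2 : ℝ) • 1 = (P - C) * A + A * (P - C) := fun P => by
    rw [hA_symm.eq, sub_mul, mul_sub, hAC, hCA, two_smul]; abel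
  have hdecay := tendsto_zero_of_hasDerivWithinAt_sylvester (E := fun t => Ψ t - C)
    (add_pos hc hc) hbound hbound
    (fun t ht i j => hshift (Ψ t) ▸ (hΨ t ht i j).sub_const (C i j)) i j
  simpa using hdecay.add_const (C i j)
end

section
/- Let P and Q be probability measures on ℝ^d with finite first moments. Then sup over h ∈ W₁ of |∫ h dP − ∫ h dQ| equals sup over h ∈ H of |∫ h dP − ∫ h dQ|, where W₁ is the set of all 1-Lipschitz functions h : ℝ^d → ℝ and H := { h ∈ C³(ℝ^d) : h ∈ W₁ and for each k ∈ {1,2,3}, sup_{x ∈ ℝ^d} ‖∇^k h(x)‖ < ∞ }. -/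
/-!
Since `H ⊆ W₁`, only `sup_{W₁} ≤ sup_H` needs an argument. A bounded 1-Lipschitz `h` is
uniformly approximated by its mollifications `φ ⋆ h`, which are again 1-Lipschitz, smooth, and
have bounded derivatives of every order because each derivative falls on `φ` while `h` stays
bounded. A general 1-Lipschitz `h` is reduced to the bounded case by truncating it at levels
`±n`; dominated convergence (the first moments provide the dominating function) lets `n → ∞`
in both integrals.
-/

open MeasureTheory Filter Topology ContinuousLinearMap Metric
open scoped Convolution ContDiff

section FirstMoment

variable {E : Type*} [NormedAddCommGroup E] [MeasurableSpace E] [OpensMeasurableSpace E]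
  {μ ν : Measure E} {h : E → ℝ}

theorem LipschitzWith.integrable_of_integrable_norm [IsFiniteMeasure μ] {K : NNReal}
    (hh : LipschitzWith K h) (hμ : Integrable (fun x => ‖x‖) μ) : Integrable h μ := by
  refine ((integrable_const |h 0|).add (hμ.const_mul K)).mono'
    hh.continuous.aestronglyMeasurable (Eventually.of_forall fun x => ?_)
  have := hh.dist_le_mul x 0
  rw [Real.dist_eq, dist_zero_right] at this
  simp only [Real.norm_eq_abs, Pi.add_apply]
  linarith [abs_sub_abs_le_abs_sub (h x) (h 0)]

theorem LipschitzWith.abs_integral_sub_apply_zero_le [IsProbabilityMeasure μ]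
    (hh : LipschitzWith 1 h) (hμ : Integrable (fun x => ‖x‖) μ) :
    |(∫ x, h x ∂μ) - h 0| ≤ ∫ x, ‖x‖ ∂μ := by
  have hsub : ∫ x, (h x - h 0) ∂μ = (∫ x, h x ∂μ) - h 0 := by
    simp [integral_sub (hh.integrable_of_integrable_norm hμ) (integrable_const _)]
  rw [← hsub, ← Real.norm_eq_abs]
  refine norm_integral_le_of_norm_le hμ (Eventually.of_forall fun x => ?_)
  simpa [Real.dist_eq] using hh.dist_le_mul x 0

theorem LipschitzWith.abs_integral_sub_integral_le [IsProbabilityMeasure μ]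
    [IsProbabilityMeasure ν] (hh : LipschitzWith 1 h) (hμ : Integrable (fun x => ‖x‖) μ)
    (hν : Integrable (fun x => ‖x‖) ν) :
    |(∫ x, h x ∂μ) - ∫ x, h x ∂ν| ≤ (∫ x, ‖x‖ ∂μ) + ∫ x, ‖x‖ ∂ν := by
  have hμ' := abs_le.1 (hh.abs_integral_sub_apply_zero_le hμ)
  have hν' := abs_le.1 (hh.abs_integral_sub_apply_zero_le hν)
  rw [abs_le]
  constructor <;> linarith

end FirstMoment

theorem abs_integral_sub_integral_le_of_dist_le {α : Type*} [MeasurableSpace α] {μ : Measure α}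
    [IsProbabilityMeasure μ] {g h : α → ℝ} {δ : ℝ} (hg : Integrable g μ) (hh : Integrable h μ)
    (hgh : ∀ x, dist (g x) (h x) ≤ δ) :
    |(∫ x, g x ∂μ) - ∫ x, h x ∂μ| ≤ δ := by
  rw [← integral_sub hg hh, ← Real.norm_eq_abs]
  simpa using norm_integral_le_of_norm_le_const (μ := μ) (f := fun x => g x - h x)
    (Eventually.of_forall hgh)

theorem tendsto_integral_max_min {α : Type*} [MeasurableSpace α] {μ : Measure α} {h : α → ℝ}
    (hh : Integrable h μ) :
    Tendsto (fun n : ℕ => ∫ x, max (min (h x) n) (-n) ∂μ) atTop (𝓝 (∫ x, h x ∂μ)) := by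
  refine tendsto_integral_of_dominated_convergence (fun x => |h x|)
    (fun n => (hh.aestronglyMeasurable.inf aestronglyMeasurable_const).sup
      aestronglyMeasurable_const)
    hh.abs (fun n => Eventually.of_forall fun x => ?_) (Eventually.of_forall fun x => ?_)
  · grind [Real.norm_eq_abs, Nat.cast_nonneg]
  · refine tendsto_const_nhds.congr' ((eventually_ge_atTop ⌈|h x|⌉₊).mono fun n hn => ?_)
    have hx := abs_le.1 (Nat.ceil_le.1 hn)
    simp only [min_eq_left hx.2, max_eq_left hx.1]

section Convolution

-- `G : Type` rather than `Type*`: the induction below moves from `V` to `G →L[ℝ] V`, so `G` and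
-- the coefficient spaces must share a universe, and at the end `V = ℝ`.
variable {G : Type} [NormedAddCommGroup G] [MeasurableSpace G] {μ : Measure G}

theorem norm_convolution_le_of_norm_le {V W : Type*} [NormedAddCommGroup V] [NormedSpace ℝ V]
    [NormedAddCommGroup W] [NormedSpace ℝ W] (L : V →L[ℝ] ℝ →L[ℝ] W) {f : G → V} {g : G → ℝ}
    {M : ℝ} (hf : Integrable f μ) (hg : ∀ x, ‖g x‖ ≤ M) (x : G) :
    ‖(f ⋆[L, μ] g) x‖ ≤ ‖L‖ * (∫ t, ‖f t‖ ∂μ) * M := by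
  rw [convolution_def, ← integral_const_mul, ← integral_mul_const]
  refine norm_integral_le_of_norm_le ((hf.norm.const_mul _).mul_const _)
    (Eventually.of_forall fun t => ?_)
  calc ‖L (f t) (g (x - t))‖ ≤ ‖L‖ * ‖f t‖ * ‖g (x - t)‖ := L.le_opNorm₂ _ _
    _ ≤ ‖L‖ * ‖f t‖ * M := by gcongr; exact hg _

variable [NormedSpace ℝ G] [BorelSpace G]

theorem exists_bound_iteratedFDeriv_convolution [SFinite μ] [μ.IsAddLeftInvariant]
    [μ.IsNegInvariant] [IsLocallyFiniteMeasure μ] {V W : Type} [NormedAddCommGroup V]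
    [NormedSpace ℝ V] [NormedAddCommGroup W] [NormedSpace ℝ W] (L : V →L[ℝ] ℝ →L[ℝ] W)
    {f : G → V} {g : G → ℝ} {M : ℝ} (hfc : HasCompactSupport f) (hf : ContDiff ℝ ∞ f)
    (hg : Continuous g) (hgM : ∀ x, ‖g x‖ ≤ M) (k : ℕ) :
    ∃ C, ∀ x, ‖iteratedFDeriv ℝ k (f ⋆[L, μ] g) x‖ ≤ C := by
  induction k generalizing V W with
  | zero =>
    exact ⟨_, fun x => (norm_iteratedFDeriv_zero).trans_le
      (norm_convolution_le_of_norm_le L (hf.continuous.integrable_of_hasCompactSupport hfc) hgM x)⟩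
  | succ k ih =>
    obtain ⟨C, hC⟩ := ih (L.precompL G) (hfc.fderiv ℝ) (hf.fderiv_right (m := ∞) (by norm_num))
    have hderiv : fderiv ℝ (f ⋆[L, μ] g) = fderiv ℝ f ⋆[L.precompL G, μ] g :=
      funext fun x => (hfc.hasFDerivAt_convolution_left L (hf.of_le (by norm_num))
        hg.locallyIntegrable x).fderiv
    exact ⟨C, fun x => by rw [← norm_iteratedFDeriv_fderiv, hderiv]; exact hC x⟩

variable [FiniteDimensional ℝ G] [HasContDiffBump G]

theorem LipschitzWith.normed_convolution [μ.IsAddHaarMeasure] {K : NNReal} {h : G → ℝ}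
    (hh : LipschitzWith K h) (φ : ContDiffBump (0 : G)) :
    LipschitzWith K (φ.normed μ ⋆[lsmul ℝ ℝ, μ] h) := by
  have hexists : ConvolutionExists (φ.normed μ) h (lsmul ℝ ℝ) μ :=
    φ.hasCompactSupport_normed.convolutionExists_left_of_continuous_right _
      φ.continuous_normed.locallyIntegrable hh.continuous
  refine LipschitzWith.of_dist_le_mul fun x y => ?_
  rw [Real.dist_eq, convolution_def, convolution_def, ← integral_sub (hexists x) (hexists y),
    ← Real.norm_eq_abs]
  calc ‖∫ t, lsmul ℝ ℝ (φ.normed μ t) (h (x - t)) - lsmul ℝ ℝ (φ.normed μ t) (h (y - t)) ∂μ‖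
      ≤ ∫ t, φ.normed μ t * (K * dist x y) ∂μ := by
        refine norm_integral_le_of_norm_le (φ.integrable_normed.mul_const _)
          (Eventually.of_forall fun t => ?_)
        rw [lsmul_apply, lsmul_apply, ← smul_sub, norm_smul,
          Real.norm_of_nonneg (φ.nonneg_normed t)]
        gcongr
        · exact φ.nonneg_normed t
        · simpa [dist_eq_norm] using hh.dist_le_mul (x - t) (y - t)
    _ = K * dist x y := by rw [integral_mul_const, φ.integral_normed, one_mul]

theorem LipschitzWith.exists_contDiff_bounded_iteratedFDeriv_near {K : NNReal}
    {h : G → ℝ} {M : ℝ} (hh : LipschitzWith K h) (hM : ∀ x, ‖h x‖ ≤ M) {ε : ℝ} (hε : 0 < ε) :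
    ∃ g : G → ℝ, ContDiff ℝ ∞ g ∧ LipschitzWith K g ∧
      (∀ k : ℕ, ∃ C, ∀ x, ‖iteratedFDeriv ℝ k g x‖ ≤ C) ∧ ∀ x, dist (g x) (h x) ≤ ε := by
  have hδ : 0 < ε / (K + 1) := by positivity
  let φ : ContDiffBump (0 : G) := ⟨ε / (K + 1) / 2, ε / (K + 1), by positivity, by linarith⟩
  let μ : Measure G := Measure.addHaar
  refine ⟨φ.normed μ ⋆[lsmul ℝ ℝ, μ] h,
    φ.hasCompactSupport_normed.contDiff_convolution_left _ φ.contDiff_normed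
      hh.continuous.locallyIntegrable,
    hh.normed_convolution φ,
    exists_bound_iteratedFDeriv_convolution _ φ.hasCompactSupport_normed φ.contDiff_normed
      hh.continuous hM,
    fun x => φ.dist_normed_convolution_le hh.continuous.aestronglyMeasurable fun y hy => ?_⟩
  calc dist (h y) (h x) ≤ K * dist y x := hh.dist_le_mul y x
    _ ≤ K * (ε / (K + 1)) := by gcongr; exact (mem_ball.1 hy).le
    _ ≤ ε := by
      rw [mul_div_assoc']
      exact div_le_of_le_mul₀ (by positivity) hε.le (by nlinarith)

end Convolution

section TestFunctions

variable {G : Type} [NormedAddCommGroup G] [NormedSpace ℝ G] [FiniteDimensional ℝ G]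
  [MeasurableSpace G] [BorelSpace G] [HasContDiffBump G] {P Q : Measure G}
  [IsProbabilityMeasure P] [IsProbabilityMeasure Q]

theorem LipschitzWith.exists_smooth_abs_integral_sub_le {K : NNReal} {h : G → ℝ} {M : ℝ}
    (hP : Integrable (fun x => ‖x‖) P) (hQ : Integrable (fun x => ‖x‖) Q)
    (hh : LipschitzWith K h) (hM : ∀ x, ‖h x‖ ≤ M) {ε : ℝ} (hε : 0 < ε) :
    ∃ g : G → ℝ, ContDiff ℝ ∞ g ∧ LipschitzWith K g ∧
      (∀ k : ℕ, ∃ C, ∀ x, ‖iteratedFDeriv ℝ k g x‖ ≤ C) ∧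
      |(∫ x, h x ∂P) - ∫ x, h x ∂Q| ≤ |(∫ x, g x ∂P) - ∫ x, g x ∂Q| + ε := by
  obtain ⟨g, hg, hgK, hgb, hgh⟩ :=
    hh.exists_contDiff_bounded_iteratedFDeriv_near hM (half_pos hε)
  refine ⟨g, hg, hgK, hgb, ?_⟩
  have hgP := abs_integral_sub_integral_le_of_dist_le
    (hgK.integrable_of_integrable_norm hP) (hh.integrable_of_integrable_norm hP) hgh
  have hgQ := abs_integral_sub_integral_le_of_dist_le
    (hgK.integrable_of_integrable_norm hQ) (hh.integrable_of_integrable_norm hQ) hgh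
  grind

end TestFunctions

/-- Lemma `wass_1` of the paper: for probability measures on ℝ^d with finite first moments,
the supremum of `|∫ h dP - ∫ h dQ|` over all 1-Lipschitz functions `h` equals the supremum
over 1-Lipschitz `C³` functions with bounded derivatives of orders one to three. -/
theorem stmt_8 (d : ℕ) (P Q : Measure (EuclideanSpace ℝ (Fin d)))
    [IsProbabilityMeasure P] [IsProbabilityMeasure Q]
    (hP : Integrable (fun x => ‖x‖) P) (hQ : Integrable (fun x => ‖x‖) Q) :
    sSup {r : ℝ | ∃ h : EuclideanSpace ℝ (Fin d) → ℝ, LipschitzWith 1 h ∧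
        r = |(∫ x, h x ∂P) - ∫ x, h x ∂Q|} =
    sSup {r : ℝ | ∃ h : EuclideanSpace ℝ (Fin d) → ℝ, ContDiff ℝ 3 h ∧ LipschitzWith 1 h ∧
        (∀ k : ℕ, 1 ≤ k → k ≤ 3 → ∃ C : ℝ, ∀ x, ‖iteratedFDeriv ℝ k h x‖ ≤ C) ∧
        r = |(∫ x, h x ∂P) - ∫ x, h x ∂Q|} := by
  set S := {r : ℝ | ∃ h : EuclideanSpace ℝ (Fin d) → ℝ, ContDiff ℝ 3 h ∧ LipschitzWith 1 h ∧
      (∀ k : ℕ, 1 ≤ k → k ≤ 3 → ∃ C : ℝ, ∀ x, ‖iteratedFDeriv ℝ k h x‖ ≤ C) ∧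
      r = |(∫ x, h x ∂P) - ∫ x, h x ∂Q|}
  have hS : BddAbove S := ⟨_, by
    rintro _ ⟨h, -, hh, -, rfl⟩
    exact hh.abs_integral_sub_integral_le hP hQ⟩
  have hzero : (0 : ℝ) ∈ S :=
    ⟨0, contDiff_const, LipschitzWith.const' 0, fun k _ _ => ⟨0, fun x => by simp⟩, by simp⟩
  have hbounded (h) (M : ℝ) (hh : LipschitzWith 1 h) (hM : ∀ x, ‖h x‖ ≤ M) :
      |(∫ x, h x ∂P) - ∫ x, h x ∂Q| ≤ sSup S := by
    refine le_of_forall_pos_le_add fun ε hε => ?_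
    obtain ⟨g, hg, hgl, hgb, hle⟩ := hh.exists_smooth_abs_integral_sub_le hP hQ hM hε
    exact hle.trans (add_le_add_left
      (le_csSup hS ⟨g, hg.of_le (WithTop.coe_le_coe.2 le_top), hgl, fun k _ _ => hgb k, rfl⟩) _)
  refine le_antisymm (csSup_le ⟨0, 0, LipschitzWith.const' 0, by simp⟩ ?_)
    (csSup_le_csSup ⟨_, by rintro _ ⟨h, hh, rfl⟩; exact hh.abs_integral_sub_integral_le hP hQ⟩
      ⟨0, hzero⟩ fun r ⟨h, _, hh, _, hr⟩ => ⟨h, hh, hr⟩)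
  rintro _ ⟨h, hh, rfl⟩
  refine le_of_tendsto' ((tendsto_integral_max_min (hh.integrable_of_integrable_norm hP)).sub
    (tendsto_integral_max_min (hh.integrable_of_integrable_norm hQ))).abs fun n =>
      hbounded _ n ((hh.min_const _).max_const _) fun x => ?_
  grind [Real.norm_eq_abs, Nat.cast_nonneg]
end

section
/- Let A be an n×n real symmetric negative definite matrix and let Δτ > 0 satisfy Δτ · ‖A‖₂ < 1, where ‖A‖₂ is the operator norm induced by the Euclidean norm (equal to the largest eigenvalue of −A). Define the iteration Ψ_{k+1} := Ψ_k + ( Ψ_k Aᵀ + A Ψ_k + 2I ) Δτ, where I is the n×n identity matrix. Then for any initial n×n real matrix Ψ₀, the sequence Ψ_k converges to (−A)⁻¹ as k → ∞. -/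
/-!
With `B = -A` positive definite, the error `Eₖ = Ψₖ - B⁻¹` satisfies the homogeneous recursion
`Eₖ₊₁ = Eₖ - Δτ (Eₖ B + B Eₖ)`. In an orthonormal eigenbasis of `B`, with eigenvalues `λ`, this
multiplies the `(a, b)` entry by `1 - Δτ (λₐ + λ_b)`, which lies in `(-1, 1)` because
`0 < λ ≤ ‖A‖₂` and `Δτ ‖A‖₂ < 1`. Hence the error decays geometrically.
-/

open Matrix Filter Topology

namespace Matrix

variable {n : Type*} [Fintype n]

theorem posDef_neg_of_dotProduct_mulVec_neg {A : Matrix n n ℝ} (hA : A.IsSymm)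
    (h : ∀ x : n → ℝ, x ≠ 0 → x ⬝ᵥ (A *ᵥ x) < 0) : (-A).PosDef :=
  .of_dotProduct_mulVec_pos (by simpa using hA.neg) fun x hx => by
    simpa [neg_mulVec] using h x hx

variable [DecidableEq n]

theorem lyapunov_iterate_diagonal_apply {R : Type*} [CommRing R] {d : n → R} {c : R}
    {X : ℕ → Matrix n n R}
    (hX : ∀ k, X (k + 1) = X k + c • (X k * diagonal d + diagonal d * X k)) (k : ℕ) (a b : n) :
    X k a b = (1 + c * (d a + d b)) ^ k * X 0 a b := by
  induction k with
  | zero => simp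
  | succ k ih =>
    rw [hX, add_apply, smul_apply, add_apply, mul_diagonal, diagonal_mul, ih, smul_eq_mul]
    ring

theorem tendsto_lyapunov_iterate_diagonal {R : Type*} [NormedCommRing R] {d : n → R} {c : R}
    (hcd : ∀ a b, ‖1 + c * (d a + d b)‖ < 1) {X : ℕ → Matrix n n R}
    (hX : ∀ k, X (k + 1) = X k + c • (X k * diagonal d + diagonal d * X k)) :
    Tendsto X atTop (𝓝 0) := by
  refine tendsto_pi_nhds.2 fun a => tendsto_pi_nhds.2 fun b => ?_
  have hgeom := (tendsto_pow_atTop_nhds_zero_of_norm_lt_one (hcd a b)).mul_const (X 0 a b)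
  rw [zero_mul] at hgeom
  exact hgeom.congr fun k => (lyapunov_iterate_diagonal_apply hX k a b).symm

theorem IsHermitian.tendsto_lyapunov_iterate {𝕜 : Type*} [RCLike 𝕜] {A : Matrix n n 𝕜}
    (hA : A.IsHermitian) {c : 𝕜}
    (hc : ∀ a b, ‖1 + c * (hA.eigenvalues a + hA.eigenvalues b)‖ < 1) {E : ℕ → Matrix n n 𝕜}
    (hE : ∀ k, E (k + 1) = E k + c • (E k * A + A * E k)) : Tendsto E atTop (𝓝 0) := by
  set φ := Unitary.conjStarAlgAut 𝕜 _ (star hA.eigenvectorUnitary)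
  have hF : Tendsto (fun k => φ (E k)) atTop (𝓝 0) := by
    refine tendsto_lyapunov_iterate_diagonal (d := RCLike.ofReal ∘ hA.eigenvalues) (c := c)
      (by simpa using hc) fun k => ?_
    rw [hE, ← hA.conjStarAlgAut_star_eigenvectorUnitary, map_add, map_smul, map_add, map_mul,
      map_mul]
  have hφsymm : Continuous fun X : Matrix n n 𝕜 => φ.symm X := by
    simp only [φ, Unitary.conjStarAlgAut_symm, star_star, Unitary.conjStarAlgAut_apply]
    fun_prop
  simpa only [Function.comp_def, StarAlgEquiv.symm_apply_apply, map_zero] using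
    (hφsymm.tendsto 0).comp hF

end Matrix

theorem stmt_16_general (n : ℕ) (A : Matrix (Fin n) (Fin n) ℝ)
    (hA_symm : A.IsSymm)
    (hA_neg : ∀ x : Fin n → ℝ, x ≠ 0 → x ⬝ᵥ (A *ᵥ x) < 0)
    -- `normA` is the largest eigenvalue of `-A`, i.e. the Euclidean operator norm of `A`
    (normA : ℝ)
    (hnorm_ub : ∀ (c : ℝ) (v : Fin n → ℝ), v ≠ 0 → A *ᵥ v = c • v → -normA ≤ c)
    (Δτ : ℝ) (hΔτ : 0 < Δτ) (hstep : Δτ * normA < 1)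
    (Ψ : ℕ → Matrix (Fin n) (Fin n) ℝ)
    (hΨ : ∀ k, Ψ (k + 1) = Ψ k +
      Δτ • (Ψ k * Aᵀ + A * Ψ k + (2 : ℝ) • (1 : Matrix (Fin n) (Fin n) ℝ))) :
    ∀ i j, Tendsto (fun k => Ψ k i j) atTop (nhds ((-A)⁻¹ i j)) := by
  have hB := posDef_neg_of_dotProduct_mulVec_neg hA_symm hA_neg
  set B := -A with hB_def
  set μ := hB.isHermitian.eigenvalues
  have hμ_le : ∀ a, μ a ≤ normA := fun a => by
    have hv := hB.isHermitian.mulVec_eigenvectorBasis a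
    have := hnorm_ub (-μ a) _ ((WithLp.ofLp_eq_zero 2).ne.2 <|
      hB.isHermitian.eigenvectorBasis.orthonormal.ne_zero a) (by
        rw [← neg_neg A, neg_mulVec, ← hB_def, hv, neg_smul])
    linarith
  have hB_unit : IsUnit B.det := (isUnit_iff_isUnit_det B).1 hB.isUnit
  have herror : ∀ k, Ψ (k + 1) - B⁻¹ =
      (Ψ k - B⁻¹) + (-Δτ) • ((Ψ k - B⁻¹) * B + B * (Ψ k - B⁻¹)) := fun k => by
    rw [hΨ k, hA_symm.eq, sub_mul, mul_sub, nonsing_inv_mul B hB_unit, mul_nonsing_inv B hB_unit,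
      ← neg_neg A, ← hB_def, mul_neg, neg_mul]
    module
  have hcontract : ∀ a b, |1 + -Δτ * (μ a + μ b)| < 1 := fun a b => by
    have := hB.eigenvalues_pos a
    have := hB.eigenvalues_pos b
    rw [abs_lt]
    constructor <;> nlinarith [hμ_le a, hμ_le b]
  have hlim := (hB.isHermitian.tendsto_lyapunov_iterate (c := -Δτ) (E := (Ψ · - B⁻¹))
    (by simpa only [RCLike.ofReal_real_eq_id, id, Real.norm_eq_abs]) herror).add_const B⁻¹
  simp only [sub_add_cancel, zero_add] at hlim
  exact fun i j => tendsto_pi_nhds.1 (tendsto_pi_nhds.1 hlim i) j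

/-- Convergence of the Euler iteration for the Lyapunov equation (Stage 2 of the two-stage
RAPTOR-GEN algorithm): for `A` real symmetric negative definite with Euclidean operator norm
`‖A‖₂` (the largest eigenvalue of `-A`) and step size `Δτ > 0` with `Δτ ‖A‖₂ < 1`, the
iteration `Ψ_{k+1} = Ψ_k + (Ψ_k Aᵀ + A Ψ_k + 2 I) Δτ` converges to `(-A)⁻¹` from any initial
value. -/
theorem stmt_16 (n : ℕ) (A : Matrix (Fin n) (Fin n) ℝ)
    (hA_symm : A.IsSymm)
    (hA_neg : ∀ x : Fin n → ℝ, x ≠ 0 → x ⬝ᵥ (A *ᵥ x) < 0)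
    -- `normA` is the largest eigenvalue of `-A`, i.e. the Euclidean operator norm of `A`
    (normA : ℝ)
    (hnorm_ub : ∀ (c : ℝ) (v : Fin n → ℝ), v ≠ 0 → A *ᵥ v = c • v → -normA ≤ c)
    (hnorm_mem : ∃ v : Fin n → ℝ, v ≠ 0 ∧ A *ᵥ v = (-normA) • v)
    (Δτ : ℝ) (hΔτ : 0 < Δτ) (hstep : Δτ * normA < 1)
    (Ψ : ℕ → Matrix (Fin n) (Fin n) ℝ)
    (hΨ : ∀ k, Ψ (k + 1) = Ψ k +
      Δτ • (Ψ k * Aᵀ + A * Ψ k + (2 : ℝ) • (1 : Matrix (Fin n) (Fin n) ℝ))) :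
    ∀ i j, Tendsto (fun k => Ψ k i j) atTop (nhds ((-A)⁻¹ i j)) :=
  stmt_16_general n A hA_symm hA_neg normA hnorm_ub Δτ hΔτ hstep Ψ hΨ
end
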